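/- Ground state of the trigonometric model: let μ(x) = Π_{i=1}^N sin^a|x_i − x_{i+1}| (indices cyclic, so the product includes sin^a(x_N − x_1)). Then for every spin state |s⟩ ∈ Σ, the Σ-valued function Ψ_0 = μ · Λ|s⟩ satisfies H_2 Ψ_0 = 2Na² Ψ_0 at every point of C_2. -/

import Mathlib

noncomputable section

/-- The spin space `Σ`: complex functions on `Fin N → Fin d`. -/
abbrev Spin (N d : ℕ) : Type := (Fin N → Fin d) → ℂ

/-- Partial derivative `∂_i F` of a function of `N` real variables. -/
noncomputable def pd {N : ℕ} {E : Type} [NormedAddCommGroup E] [NormedSpace ℝ E]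
    (i : Fin N) (F : (Fin N → ℝ) → E) : (Fin N → ℝ) → E :=
  fun x => fderiv ℝ F x (Pi.single i 1)

/-- The spin exchange operator `S_{ij}`, transposing the `i`-th and `j`-th spin slots. -/
def Sop {N d : ℕ} (i j : Fin N) (v : Spin N d) : Spin N d :=
  fun c => v (c ∘ Equiv.swap i j)

/-- The action of a permutation `π ∈ S_N` on the spin space, permuting the `N` spin slots. -/
def spinPerm {N d : ℕ} (π : Equiv.Perm (Fin N)) (v : Spin N d) : Spin N d :=
  fun c => v (c ∘ π)

/-- The spin vector `|s_i⟩ = (1/N!) ∑_{π ∈ S_N, π(1) = i} π |s⟩`. -/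
noncomputable def sComp {N d : ℕ} [NeZero N] (s : Spin N d) (i : Fin N) : Spin N d :=
  (N.factorial : ℂ)⁻¹ •
    ∑ π ∈ Finset.univ.filter (fun π : Equiv.Perm (Fin N) => π 0 = i), spinPerm π s

/-- The symmetrization `Λ|s⟩ = ∑ i, |s_i⟩`. -/
noncomputable def Lam {N d : ℕ} [NeZero N] (s : Spin N d) : Spin N d :=
  ∑ i : Fin N, sComp s i

/-- The configuration space `C_2 = {x : x_1 < ⋯ < x_N, x_N - x_1 < π}`
(here `x (-1)` is the last coordinate `x_N`). -/
def C2 (N : ℕ) [NeZero N] : Set (Fin N → ℝ) :=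
  {x | StrictMono x ∧ x (-1) - x 0 < Real.pi}

/-- The Hamiltonian `H_2 = -∑ i ∂_i² + V_2` with
`V_2 = 2a² ∑ i cot(x_i - x_{i-1}) cot(x_i - x_{i+1})
  + 2a ∑ i csc²(x_i - x_{i+1}) (a - S_{i,i+1})` (indices cyclic). -/
noncomputable def H2 {N d : ℕ} [NeZero N] (a : ℝ)
    (Ψ : (Fin N → ℝ) → Spin N d) : (Fin N → ℝ) → Spin N d :=
  fun x =>
    -(∑ i : Fin N, pd i (pd i Ψ) x)
    + (2 * a ^ 2 * ∑ i : Fin N,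
        (Real.cos (x i - x (i - 1)) / Real.sin (x i - x (i - 1))) *
          (Real.cos (x i - x (i + 1)) / Real.sin (x i - x (i + 1)))) • Ψ x
    + (2 * a) • ∑ i : Fin N,
        ((Real.sin (x i - x (i + 1))) ^ 2)⁻¹ • (a • Ψ x - Sop i (i + 1) (Ψ x))

/-- The gauge factor `μ(x) = ∏ i sin^a |x_i - x_{i+1}|` (indices cyclic). -/
noncomputable def mu2 {N : ℕ} [NeZero N] (a : ℝ) (x : Fin N → ℝ) : ℝ :=
  ∏ i : Fin N, (Real.sin |x i - x (i + 1)|) ^ a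

namespace Aux14

/-- symmetry of Lam -/
lemma Lam_eq {N d : ℕ} [NeZero N] (s : Spin N d) :
    Lam s = (N.factorial : ℂ)⁻¹ • ∑ π : Equiv.Perm (Fin N), spinPerm π s := by
  rw [Lam]
  simp only [sComp]
  rw [← Finset.smul_sum, Finset.sum_fiberwise]

lemma spinPerm_Lam {N d : ℕ} [NeZero N] (σ : Equiv.Perm (Fin N)) (s : Spin N d) :
    spinPerm σ (Lam s) = Lam s := by
  rw [Lam_eq]
  have h1 : spinPerm σ ((N.factorial : ℂ)⁻¹ • ∑ π : Equiv.Perm (Fin N), spinPerm π s)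
      = (N.factorial : ℂ)⁻¹ • ∑ π : Equiv.Perm (Fin N), spinPerm (σ * π) s := by
    funext c
    simp only [spinPerm, Pi.smul_apply, Finset.sum_apply, smul_eq_mul]
    congr 1
  rw [h1]
  congr 1
  exact Fintype.sum_equiv (Equiv.mulLeft σ) _ _ (fun π => rfl)

lemma Sop_Lam {N d : ℕ} [NeZero N] (i j : Fin N) (s : Spin N d) :
    Sop i j (Lam s) = Lam s :=
  spinPerm_Lam (Equiv.swap i j) s

lemma Sop_smul {N d : ℕ} (i j : Fin N) (r : ℝ) (v : Spin N d) :
    Sop i j (r • v) = r • Sop i j v := rfl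

lemma C2_open (N : ℕ) [NeZero N] : IsOpen (C2 N) := by
  have h1 : IsOpen {x : Fin N → ℝ | StrictMono x} := by
    have he : {x : Fin N → ℝ | StrictMono x}
        = ⋂ i : Fin N, ⋂ j : Fin N, {x : Fin N → ℝ | i < j → x i < x j} := by
      ext x
      simp only [Set.mem_setOf_eq, Set.mem_iInter, StrictMono]
    rw [he]
    refine isOpen_iInter_of_finite fun i => isOpen_iInter_of_finite fun j => ?_
    by_cases h : i < j
    · have he2 : {x : Fin N → ℝ | i < j → x i < x j} = {x : Fin N → ℝ | x i < x j} := by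
        ext x; simp [h]
      rw [he2]
      exact isOpen_lt (continuous_apply i) (continuous_apply j)
    · convert isOpen_univ
      ext x; simp [h]
  have h2 : IsOpen {x : Fin N → ℝ | x (-1) - x 0 < Real.pi} :=
    isOpen_lt ((continuous_apply (-1 : Fin N)).sub (continuous_apply (0 : Fin N))) continuous_const
  exact h1.inter h2

/-- Fin facts -/
lemma fin_add_one_ne {N : ℕ} [NeZero N] (hN : 3 ≤ N) (j : Fin N) : j + 1 ≠ j := by
  intro h
  have h1 : (1 : Fin N) = 0 := by
    have := add_left_cancel (a := j) (b := 1) (c := 0) (by rw [add_zero]; exact h)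
    exact this
  have := congrArg Fin.val h1
  rw [Fin.val_one', Fin.val_zero, Nat.mod_eq_of_lt (by omega)] at this
  omega

lemma fin_sub_one_ne {N : ℕ} [NeZero N] (hN : 3 ≤ N) (j : Fin N) : j - 1 ≠ j := by
  intro h
  have h2 : j - 1 + 1 = j := sub_add_cancel j 1
  rw [h] at h2
  exact fin_add_one_ne hN j h2

lemma neg_one_eq_last (n : ℕ) : (-1 : Fin (n + 1)) = Fin.last n :=
  (eq_neg_of_add_eq_zero_left (Fin.last_add_one n)).symm


noncomputable def sg {N : ℕ} [NeZero N] (i : Fin N) : ℝ := if i + 1 = 0 then 1 else -1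

noncomputable def ell {N : ℕ} [NeZero N] (i : Fin N) : (Fin N → ℝ) →L[ℝ] ℝ :=
  sg i • ((ContinuousLinearMap.proj i : (Fin N → ℝ) →L[ℝ] ℝ) - ContinuousLinearMap.proj (i + 1))

lemma ell_apply {N : ℕ} [NeZero N] (i : Fin N) (v : Fin N → ℝ) :
    ell i v = sg i * (v i - v (i + 1)) := rfl

lemma C2_bounds {N : ℕ} [NeZero N] (hN : 3 ≤ N) {x : Fin N → ℝ} (hx : x ∈ C2 N) (i : Fin N) :
    0 < ell i x ∧ ell i x < Real.pi := by
  obtain ⟨n, rfl⟩ : ∃ n, N = n + 1 := ⟨N - 1, by omega⟩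
  obtain ⟨hmono, hlt⟩ := hx
  rw [ell_apply, sg]
  split_ifs with h
  · have hi : i = -1 := eq_neg_of_add_eq_zero_left h
    have hn : 0 < n := by omega
    have h0 : (0 : Fin (n+1)) < -1 := by
      rw [neg_one_eq_last, Fin.lt_def]
      simpa [Fin.val_last] using hn
    have hm := hmono h0
    constructor
    · rw [one_mul, h, hi]; linarith
    · rw [one_mul, h, hi]; exact hlt
  · have hlast : i ≠ Fin.last n := by
      intro hl; exact h (by rw [hl]; exact Fin.last_add_one n)
    have hstep : i < i + 1 := by
      rw [Fin.lt_def, Fin.val_add_one, if_neg hlast]; omega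
    have hm := hmono hstep
    constructor
    · rw [neg_one_mul]; linarith
    · have hb1 : x (i+1) ≤ x (-1) := by
        rw [neg_one_eq_last]
        exact hmono.monotone (Fin.le_last _)
      have hb2 : x 0 ≤ x i := hmono.monotone (Fin.zero_le _)
      rw [neg_one_mul]; linarith

lemma sin_ell_pos {N : ℕ} [NeZero N] (hN : 3 ≤ N) {x : Fin N → ℝ} (hx : x ∈ C2 N) (i : Fin N) :
    0 < Real.sin (ell i x) :=
  Real.sin_pos_of_pos_of_lt_pi (C2_bounds hN hx i).1 (C2_bounds hN hx i).2

lemma abs_eq_ell {N : ℕ} [NeZero N] (hN : 3 ≤ N) {x : Fin N → ℝ} (hx : x ∈ C2 N) (i : Fin N) :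
    |x i - x (i + 1)| = ell i x := by
  have hb := (C2_bounds hN hx i).1
  rw [ell_apply, sg] at hb ⊢
  split_ifs at hb ⊢ with h
  · rw [one_mul] at hb ⊢; exact abs_of_pos hb
  · rw [neg_one_mul] at hb ⊢; exact abs_of_neg (by linarith)

lemma sin_a_ne {N : ℕ} [NeZero N] (hN : 3 ≤ N) {x : Fin N → ℝ} (hx : x ∈ C2 N) (i : Fin N) :
    Real.sin (x i - x (i + 1)) ≠ 0 := by
  have hp := sin_ell_pos hN hx i
  rw [ell_apply, sg] at hp
  split_ifs at hp with h
  · rw [one_mul] at hp; exact ne_of_gt hp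
  · rw [neg_one_mul, Real.sin_neg] at hp
    intro hc; rw [hc, neg_zero] at hp; exact lt_irrefl 0 hp

lemma sin_b_ne {N : ℕ} [NeZero N] (hN : 3 ≤ N) {x : Fin N → ℝ} (hx : x ∈ C2 N) (j : Fin N) :
    Real.sin (x j - x (j - 1)) ≠ 0 := by
  have h := sin_a_ne hN hx (j - 1)
  rw [sub_add_cancel] at h
  rw [show x j - x (j-1) = -(x (j-1) - x j) by ring, Real.sin_neg]
  exact neg_ne_zero.mpr h

noncomputable def nu {N : ℕ} [NeZero N] (a : ℝ) (y : Fin N → ℝ) : ℝ :=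
  Real.exp (∑ i : Fin N, a * Real.log (Real.sin (ell i y)))

noncomputable def Phi {N : ℕ} [NeZero N] (a : ℝ) (y : Fin N → ℝ) : (Fin N → ℝ) →L[ℝ] ℝ :=
  ∑ i : Fin N, (a * (Real.cos (ell i y) / Real.sin (ell i y))) • ell i

lemma mu2_eq_nu {N : ℕ} [NeZero N] (hN : 3 ≤ N) (a : ℝ) {y : Fin N → ℝ} (hy : y ∈ C2 N) :
    mu2 a y = nu a y := by
  rw [mu2, nu, Real.exp_sum]
  refine Finset.prod_congr rfl fun i _ => ?_
  rw [abs_eq_ell hN hy i, Real.rpow_def_of_pos (sin_ell_pos hN hy i), mul_comm]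

lemma hasFDerivAt_nu {N : ℕ} [NeZero N] (a : ℝ) (y : Fin N → ℝ)
    (hs : ∀ i : Fin N, Real.sin (ell i y) ≠ 0) :
    HasFDerivAt (nu a) (nu a y • Phi a y) y := by
  have hφ : HasFDerivAt (fun z => ∑ i : Fin N, a * Real.log (Real.sin (ell i z))) (Phi a y) y := by
    apply HasFDerivAt.fun_sum
    intro i _
    have h1 : HasDerivAt (fun t => a * Real.log (Real.sin t))
        (a * (Real.cos (ell i y) / Real.sin (ell i y))) (ell i y) := by
      have h2 : HasDerivAt (fun t => a * Real.log (Real.sin t))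
          (a * ((Real.sin (ell i y))⁻¹ * Real.cos (ell i y))) (ell i y) := ((Real.hasDerivAt_log (hs i)).comp (ell i y) (Real.hasDerivAt_sin (ell i y))).const_mul a
      convert h2 using 1
      try ring
    exact h1.comp_hasFDerivAt y (ell i).hasFDerivAt
  exact (Real.hasDerivAt_exp _).comp_hasFDerivAt y hφ

noncomputable def ct {N : ℕ} [NeZero N] (y : Fin N → ℝ) (p q : Fin N) : ℝ :=
  Real.cos (y p - y q) / Real.sin (y p - y q)

lemma ct_skew {N : ℕ} [NeZero N] (y : Fin N → ℝ) (p q : Fin N) : ct y q p = - ct y p q := by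
  rw [ct, ct, show y q - y p = -(y p - y q) by ring, Real.cos_neg, Real.sin_neg, div_neg]

lemma ct_sq {N : ℕ} [NeZero N] (y : Fin N → ℝ) (p q : Fin N)
    (h : Real.sin (y p - y q) ≠ 0) :
    (ct y p q)^2 = ((Real.sin (y p - y q))^2)⁻¹ - 1 := by
  rw [ct, div_pow, eq_sub_iff_add_eq]
  field_simp
  try linear_combination Real.sin_sq_add_cos_sq (y p - y q)

lemma sg_cot {N : ℕ} [NeZero N] (i : Fin N) (y : Fin N → ℝ) :
    Real.cos (ell i y) / Real.sin (ell i y) * sg i = ct y i (i + 1) := by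
  rw [ct, ell_apply, sg]
  split_ifs with h
  · rw [one_mul, mul_one]
  · rw [neg_one_mul, Real.cos_neg, Real.sin_neg, div_neg]
    ring

lemma Phi_apply_single {N : ℕ} [NeZero N] (hN : 3 ≤ N) (a : ℝ) (y : Fin N → ℝ) (j : Fin N) :
    Phi a y (Pi.single j 1) = a * (ct y j (j + 1) + ct y j (j - 1)) := by
  have hne : j - 1 ≠ j := fin_sub_one_ne hN j
  have hiff : ∀ i : Fin N, (i + 1 = j) ↔ (i = j - 1) := by
    intro i
    constructor
    · intro h; rw [← h]; exact (add_sub_cancel_right i 1).symm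
    · intro h; rw [h]; exact sub_add_cancel j 1
  have hterm : ∀ i : Fin N,
      ((a * (Real.cos (ell i y) / Real.sin (ell i y))) • ell i) (Pi.single j 1)
      = (if i = j then a * (Real.cos (ell i y) / Real.sin (ell i y)) * sg i else 0)
        - (if i = j - 1 then a * (Real.cos (ell i y) / Real.sin (ell i y)) * sg i else 0) := by
    intro i
    rw [ContinuousLinearMap.smul_apply, ell_apply i (Pi.single j 1), Pi.single_apply, Pi.single_apply]
    simp only [hiff i, smul_eq_mul]
    split_ifs with h1 h2
    · exact absurd (by rw [← h2]; exact h1) hne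
    · ring
    · ring
    · ring
  rw [Phi, ContinuousLinearMap.sum_apply]
  simp only [hterm]
  rw [Finset.sum_sub_distrib, Finset.sum_ite_eq', Finset.sum_ite_eq']
  simp only [Finset.mem_univ, if_true]
  rw [mul_assoc, mul_assoc, sg_cot j y, sg_cot (j-1) y, sub_add_cancel,
    ct_skew y (j-1) j]
  ring

lemma hasFDerivAt_ct {N : ℕ} [NeZero N] (p q : Fin N) (y : Fin N → ℝ)
    (h : Real.sin (y p - y q) ≠ 0) :
    HasFDerivAt (fun z : Fin N → ℝ => ct z p q)
      ((-1 / Real.sin (y p - y q)^2) •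
        ((ContinuousLinearMap.proj p : (Fin N → ℝ) →L[ℝ] ℝ) - ContinuousLinearMap.proj q)) y := by
  have hd : HasDerivAt (fun t => Real.cos t / Real.sin t)
      ((-Real.sin (y p - y q) * Real.sin (y p - y q) -
        Real.cos (y p - y q) * Real.cos (y p - y q)) / Real.sin (y p - y q) ^ 2)
      (y p - y q) :=
    (Real.hasDerivAt_cos _).div (Real.hasDerivAt_sin _) h
  have hcl : HasFDerivAt (fun z : Fin N → ℝ => z p - z q)
      ((ContinuousLinearMap.proj p : (Fin N → ℝ) →L[ℝ] ℝ) - ContinuousLinearMap.proj q) y :=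
    ((ContinuousLinearMap.proj p : (Fin N → ℝ) →L[ℝ] ℝ) - ContinuousLinearMap.proj q).hasFDerivAt
  have hval : (-Real.sin (y p - y q) * Real.sin (y p - y q) -
      Real.cos (y p - y q) * Real.cos (y p - y q)) / Real.sin (y p - y q) ^ 2
      = -1 / Real.sin (y p - y q) ^ 2 := by
    have hnum : -Real.sin (y p - y q) * Real.sin (y p - y q) -
        Real.cos (y p - y q) * Real.cos (y p - y q) = -1 := by
      linear_combination - Real.sin_sq_add_cos_sq (y p - y q)
    rw [hnum]
  have := hd.comp_hasFDerivAt y hcl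
  rw [hval] at this
  exact this

lemma sum_inv_sq {N : ℕ} [NeZero N] (x : Fin N → ℝ) :
    ∑ j : Fin N, (Real.sin (x j - x (j - 1)) ^ 2)⁻¹
      = ∑ j : Fin N, (Real.sin (x j - x (j + 1)) ^ 2)⁻¹ := by
  refine (Fintype.sum_equiv (Equiv.addRight (1 : Fin N)) _ _ fun j => ?_).symm
  simp only [Equiv.coe_addRight]
  rw [add_sub_cancel_right, show x (j+1) - x j = -(x j - x (j+1)) by ring,
    Real.sin_neg, neg_sq]

lemma key_id (a nu u v t1 t2 : ℝ) (e1 : u^2 = t1 - 1) (e2 : v^2 = t2 - 1) :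
    -(nu * ((a*(u+v))^2 + a*(-t1 + -t2))) + 2*a^2*(v*u)*nu + 2*a*(t1*(a*nu - nu))
      = 2*a^2*nu + ((a^2-a)*nu)*t1 - ((a^2-a)*nu)*t2 := by
  linear_combination (-(nu*a^2)) * e1 + (-(nu*a^2)) * e2

end Aux14

open Aux14 in
theorem stmt_14 (N d : ℕ) [NeZero N] (hN : 3 ≤ N) (hd : 1 ≤ d)
    (a : ℝ) (ha : 1 / 2 < a) (s : Spin N d) :
    ∀ x ∈ C2 N,
      H2 a (fun y => mu2 a y • Lam s) x =
        (2 * N * a ^ 2) • (mu2 a x • Lam s) := by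
  intro x hx
  have hop := C2_open N
  -- eventual equality Ψ = nu • L near any point of C2
  have hev : ∀ y ∈ C2 N,
      (fun z => mu2 a z • Lam s) =ᶠ[nhds y] (fun z => nu a z • Lam s) := by
    intro y hy
    filter_upwards [hop.mem_nhds hy] with z hz
    rw [mu2_eq_nu hN a hz]
  -- first derivative formula on C2
  have h1 : ∀ (j : Fin N), ∀ y ∈ C2 N,
      pd j (fun z => mu2 a z • Lam s) y
        = (nu a y * (a * (ct y j (j+1) + ct y j (j-1)))) • Lam s := by
    intro j y hy
    have hder : HasFDerivAt (fun z => nu a z • Lam s)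
        ((nu a y • Phi a y).smulRight (Lam s)) y :=
      (hasFDerivAt_nu a y (fun i => ne_of_gt (sin_ell_pos hN hy i))).smul_const (Lam s)
    show fderiv ℝ (fun z => mu2 a z • Lam s) y (Pi.single j 1) = _
    rw [(hev y hy).fderiv_eq, hder.fderiv]
    rw [ContinuousLinearMap.smulRight_apply, ContinuousLinearMap.smul_apply,
      Phi_apply_single hN a y j, smul_eq_mul]
  -- second derivative formula at x
  have h2 : ∀ j : Fin N,
      pd j (pd j (fun z => mu2 a z • Lam s)) x
        = (nu a x * ((a * (Real.cos (x j - x (j+1)) / Real.sin (x j - x (j+1))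
              + Real.cos (x j - x (j-1)) / Real.sin (x j - x (j-1))))^2
            + a * (-1 / Real.sin (x j - x (j+1))^2 + -1 / Real.sin (x j - x (j-1))^2))) • Lam s := by
    intro j
    have hsa := sin_a_ne hN hx j
    have hsb := sin_b_ne hN hx j
    have hev2 : pd j (fun z => mu2 a z • Lam s)
        =ᶠ[nhds x] (fun y => (nu a y * (a * (ct y j (j+1) + ct y j (j-1)))) • Lam s) := by
      filter_upwards [hop.mem_nhds hx] with y hy
      exact h1 j y hy
    have hnu : HasFDerivAt (nu a) (nu a x • Phi a x) x :=
      hasFDerivAt_nu a x (fun i => ne_of_gt (sin_ell_pos hN hx i))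
    have hD := ((hasFDerivAt_ct j (j+1) x hsa).add (hasFDerivAt_ct j (j-1) x hsb)).const_mul a
    have hmul := (hnu.mul hD).smul_const (Lam s)
    have hfd : fderiv ℝ (fun y => (nu a y * (a * (ct y j (j+1) + ct y j (j-1)))) • Lam s) x
        = ((nu a x • (a • ((-1 / Real.sin (x j - x (j+1))^2) •
              ((ContinuousLinearMap.proj j : (Fin N → ℝ) →L[ℝ] ℝ) - ContinuousLinearMap.proj (j+1))
            + (-1 / Real.sin (x j - x (j-1))^2) •
              ((ContinuousLinearMap.proj j : (Fin N → ℝ) →L[ℝ] ℝ) - ContinuousLinearMap.proj (j-1))))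
          + (a * (ct x j (j+1) + ct x j (j-1))) • (nu a x • Phi a x)).smulRight (Lam s)) :=
      hmul.fderiv
    show fderiv ℝ (pd j (fun z => mu2 a z • Lam s)) x (Pi.single j 1) = _
    rw [hev2.fderiv_eq, hfd]
    have e0 : Pi.single (M := fun _ : Fin N => ℝ) j 1 j = 1 := by simp
    have e1 : Pi.single (M := fun _ : Fin N => ℝ) j 1 (j+1) = 0 := by
      rw [Pi.single_apply, if_neg (fin_add_one_ne hN j)]
    have e2 : Pi.single (M := fun _ : Fin N => ℝ) j 1 (j-1) = 0 := by
      rw [Pi.single_apply, if_neg (fin_sub_one_ne hN j)]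
    rw [ContinuousLinearMap.smulRight_apply]
    congr 1
    simp only [ContinuousLinearMap.add_apply, ContinuousLinearMap.smul_apply,
      ContinuousLinearMap.sub_apply, ContinuousLinearMap.proj_apply, e0, e1, e2,
      smul_eq_mul, Phi_apply_single hN a x j, ct]
    ring
  have hmu : mu2 a x = nu a x := mu2_eq_nu hN a hx
  have hsa : ∀ j : Fin N, Real.sin (x j - x (j+1)) ≠ 0 := fun j => sin_a_ne hN hx j
  have hsb : ∀ j : Fin N, Real.sin (x j - x (j-1)) ≠ 0 := fun j => sin_b_ne hN hx j
  have T1 : ∑ i : Fin N, pd i (pd i (fun z => mu2 a z • Lam s)) x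
      = (∑ j : Fin N, nu a x * ((a * (Real.cos (x j - x (j+1)) / Real.sin (x j - x (j+1))
              + Real.cos (x j - x (j-1)) / Real.sin (x j - x (j-1))))^2
            + a * (-1 / Real.sin (x j - x (j+1))^2 + -1 / Real.sin (x j - x (j-1))^2))) • Lam s := by
    rw [Finset.sum_smul]
    exact Finset.sum_congr rfl fun j _ => h2 j
  have T3 : ∑ i : Fin N,
      ((Real.sin (x i - x (i + 1))) ^ 2)⁻¹ • (a • (mu2 a x • Lam s) - Sop i (i + 1) (mu2 a x • Lam s))
      = (∑ i : Fin N, ((Real.sin (x i - x (i + 1))) ^ 2)⁻¹ * (a * mu2 a x - mu2 a x)) • Lam s := by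
    rw [Finset.sum_smul]
    refine Finset.sum_congr rfl fun i _ => ?_
    rw [Sop_smul, Sop_Lam, smul_smul, ← sub_smul, smul_smul]
  -- pointwise scalar identity
  have per : ∀ j : Fin N,
      -(nu a x * ((a * (Real.cos (x j - x (j+1)) / Real.sin (x j - x (j+1))
              + Real.cos (x j - x (j-1)) / Real.sin (x j - x (j-1))))^2
            + a * (-1 / Real.sin (x j - x (j+1))^2 + -1 / Real.sin (x j - x (j-1))^2)))
        + 2*a^2*((Real.cos (x j - x (j-1)) / Real.sin (x j - x (j-1)))
            * (Real.cos (x j - x (j+1)) / Real.sin (x j - x (j+1))))*(nu a x)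
        + 2*a*(((Real.sin (x j - x (j+1))) ^ 2)⁻¹ * (a * nu a x - nu a x))
      = 2*a^2*(nu a x) + ((a^2-a)*(nu a x))*((Real.sin (x j - x (j+1)))^2)⁻¹
          - ((a^2-a)*(nu a x))*((Real.sin (x j - x (j-1)))^2)⁻¹ := by
    intro j
    have e1 := ct_sq x j (j+1) (hsa j)
    have e2 := ct_sq x j (j-1) (hsb j)
    simp only [ct] at e1 e2
    linear_combination (-(nu a x * a^2)) * e1 + (-(nu a x * a^2)) * e2
  have hstar : ∑ j : Fin N,
      (-(nu a x * ((a * (Real.cos (x j - x (j+1)) / Real.sin (x j - x (j+1))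
              + Real.cos (x j - x (j-1)) / Real.sin (x j - x (j-1))))^2
            + a * (-1 / Real.sin (x j - x (j+1))^2 + -1 / Real.sin (x j - x (j-1))^2)))
        + 2*a^2*((Real.cos (x j - x (j-1)) / Real.sin (x j - x (j-1)))
            * (Real.cos (x j - x (j+1)) / Real.sin (x j - x (j+1))))*(nu a x)
        + 2*a*(((Real.sin (x j - x (j+1))) ^ 2)⁻¹ * (a * nu a x - nu a x)))
      = 2*(N:ℝ)*a^2*(nu a x) := by
    rw [Finset.sum_congr rfl (fun j _ => per j)]
    rw [Finset.sum_sub_distrib, Finset.sum_add_distrib, ← Finset.mul_sum, ← Finset.mul_sum,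
      ← Finset.mul_sum, sum_inv_sq x]
    rw [Finset.sum_const, Finset.card_univ, Fintype.card_fin, nsmul_eq_mul]
    ring
  have hsep : ∑ j : Fin N,
      (-(nu a x * ((a * (Real.cos (x j - x (j+1)) / Real.sin (x j - x (j+1))
              + Real.cos (x j - x (j-1)) / Real.sin (x j - x (j-1))))^2
            + a * (-1 / Real.sin (x j - x (j+1))^2 + -1 / Real.sin (x j - x (j-1))^2)))
        + 2*a^2*((Real.cos (x j - x (j-1)) / Real.sin (x j - x (j-1)))
            * (Real.cos (x j - x (j+1)) / Real.sin (x j - x (j+1))))*(nu a x)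
        + 2*a*(((Real.sin (x j - x (j+1))) ^ 2)⁻¹ * (a * nu a x - nu a x)))
      = -(∑ j : Fin N, nu a x * ((a * (Real.cos (x j - x (j+1)) / Real.sin (x j - x (j+1))
              + Real.cos (x j - x (j-1)) / Real.sin (x j - x (j-1))))^2
            + a * (-1 / Real.sin (x j - x (j+1))^2 + -1 / Real.sin (x j - x (j-1))^2)))
        + (2*a^2*(∑ j : Fin N, (Real.cos (x j - x (j-1)) / Real.sin (x j - x (j-1)))
            * (Real.cos (x j - x (j+1)) / Real.sin (x j - x (j+1)))))*(nu a x)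
        + 2*a*(∑ j : Fin N, ((Real.sin (x j - x (j+1))) ^ 2)⁻¹ * (a * nu a x - nu a x)) := by
    rw [Finset.sum_add_distrib, Finset.sum_add_distrib, Finset.sum_neg_distrib,
      ← Finset.sum_mul, ← Finset.mul_sum, ← Finset.mul_sum, ← Finset.mul_sum]
  rw [hsep] at hstar
  -- assemble
  show -(∑ i : Fin N, pd i (pd i (fun y => mu2 a y • Lam s)) x)
    + (2 * a ^ 2 * ∑ i : Fin N,
        (Real.cos (x i - x (i - 1)) / Real.sin (x i - x (i - 1))) *
          (Real.cos (x i - x (i + 1)) / Real.sin (x i - x (i + 1)))) • (mu2 a x • Lam s)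
    + (2 * a) • ∑ i : Fin N,
        ((Real.sin (x i - x (i + 1))) ^ 2)⁻¹ • (a • (mu2 a x • Lam s) - Sop i (i + 1) (mu2 a x • Lam s))
    = (2 * (N:ℝ) * a ^ 2) • (mu2 a x • Lam s)
  rw [T1, T3, smul_smul, smul_smul, smul_smul, hmu, ← neg_smul, ← add_smul, ← add_smul, hstar]
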